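/- arXiv:1709.02562 — 6 statements merged into one kernel-verified Lean document; each statement's English description precedes it below -/
import Mathlib

section
/- There exists a set Σ ⊆ ℝ² such that: Σ is dense in ℝ²; Σ is line-closed; (0, 0) ∈ Σ and (1, 0) ∈ Σ; and (1/2, 0) ∉ Σ. (Hence the midpoint of a segment cannot be constructed with only a straightedge.) -/
noncomputable section

/-- The Euclidean plane ℝ². -/
abbrev Pt := EuclideanSpace ℝ (Fin 2)

/-- The point of ℝ² with coordinates (x, y). -/
def pt (x y : ℝ) : Pt := (WithLp.equiv 2 (Fin 2 → ℝ)).symm ![x, y]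

/-- The line through two points, as a subset of ℝ². -/
def lineThrough (a b : Pt) : Set Pt := {p : Pt | ∃ t : ℝ, p = a + t • (b - a)}

/-- The direction of the line `cd` is parallel to the direction of the line `ab`. -/
def ParallelDir (a b c d : Pt) : Prop := ∃ k : ℝ, d - c = k • (b - a)

/-- `S` is line-closed: for points `b1 b2 b3 b4 ∈ S` with `b1 ≠ b2`, `b3 ≠ b4`, if the lines
`b1b2` and `b3b4` are distinct and not parallel, then their intersection point lies in `S`. -/
def LineClosed (S : Set Pt) : Prop :=
  ∀ b1 b2 b3 b4 : Pt, b1 ∈ S → b2 ∈ S → b3 ∈ S → b4 ∈ S → b1 ≠ b2 → b3 ≠ b4 →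
    lineThrough b1 b2 ≠ lineThrough b3 b4 → ¬ ParallelDir b1 b2 b3 b4 →
    ∀ p : Pt, p ∈ lineThrough b1 b2 → p ∈ lineThrough b3 b4 → p ∈ S

/-- `S` is closed under intersections with the set `C`: every point of `C` lying on a line
through two distinct points of `S` belongs to `S`. -/
def IntClosed (S C : Set Pt) : Prop :=
  ∀ b1 b2 : Pt, b1 ∈ S → b2 ∈ S → b1 ≠ b2 → ∀ p ∈ C, p ∈ lineThrough b1 b2 → p ∈ S

/-- `L ⊆ ℝ²` is a line. -/
def IsLine (L : Set Pt) : Prop := ∃ a b : Pt, a ≠ b ∧ L = lineThrough a b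

/-- The line `L` is tangent to the circle with center `c` and radius `r`:
the distance from `c` to `L` equals `r`. -/
def TangentTo (L : Set Pt) (c : Pt) (r : ℝ) : Prop := Metric.infDist c L = r

/-!
Let `φ` be the projective transformation `(x, y) ↦ ((√2 - 1) x, y) / (1 + (√2 - 2) x)` and let `Σ`
be the set of points whose image under `φ` is a rational point of the projective plane, i.e. has
homogeneous coordinates proportional to a vector of `ℚ³`. In homogeneous coordinates the line
through two points of `Σ` has normal vector their cross product, which is again rational, and two
non-parallel lines meet at the cross product of their normals; so `Σ` is line-closed. The map `φ`
fixes `(0, 0)` and `(1, 0)` but sends `(1 / 2, 0)` to `(1 - 1 / √2, 0)`, so `(1 / 2, 0) ∉ Σ`.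
Finally `Σ` contains the image of `ℚ²` under `φ⁻¹`, which is continuous off a line, so `Σ` is dense.
-/

open Matrix

theorem Pt.ext' {p q : Pt} (h0 : p 0 = q 0) (h1 : p 1 = q 1) : p = q := by
  ext i
  fin_cases i
  exacts [h0, h1]

def IsRationalRay (v : Fin 3 → ℝ) : Prop := ∃ (c : ℝ) (q : Fin 3 → ℚ), v = c • fun i => (q i : ℝ)

namespace IsRationalRay

variable {u v : Fin 3 → ℝ}

theorem cross (hu : IsRationalRay u) (hv : IsRationalRay v) : IsRationalRay (u ⨯₃ v) := by
  obtain ⟨c, q, rfl⟩ := hu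
  obtain ⟨d, r, rfl⟩ := hv
  refine ⟨c * d, q ⨯₃ r, ?_⟩
  ext i
  fin_cases i <;> simp [cross_apply] <;> ring

theorem of_cross_eq_zero (hu : IsRationalRay u) (hu0 : u ≠ 0) (h : u ⨯₃ v = 0) :
    IsRationalRay v := by
  obtain ⟨a, rfl⟩ : ∃ a : ℝ, a • u = v := by
    by_contra! hind
    exact crossProduct_ne_zero_iff_linearIndependent.mpr
      ((LinearIndependent.pair_iff' hu0).mpr hind) h
  obtain ⟨c, q, rfl⟩ := hu
  exact ⟨a * c, q, by rw [smul_smul]⟩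

theorem of_dotProduct_eq_zero {m n : Fin 3 → ℝ} (hm : IsRationalRay m) (hn : IsRationalRay n)
    (hmn : m ⨯₃ n ≠ 0) (hvm : m ⬝ᵥ v = 0) (hvn : n ⬝ᵥ v = 0) : IsRationalRay v :=
  (hm.cross hn).of_cross_eq_zero hmn (by simp [cross_cross_eq_smul_sub_smul, hvm, hvn])

end IsRationalRay

/-- Homogeneous coordinates of `φ p`, for the projective transformation `φ` of the header. -/
def projCoords (p : Pt) : Fin 3 → ℝ := ![(√2 - 1) * p 0, p 1, 1 + (√2 - 2) * p 0]

def projRatPoints : Set Pt := {p | IsRationalRay (projCoords p)}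

theorem sqrt_two_sub_one_ne_zero : √2 - 1 ≠ 0 :=
  sub_ne_zero.mpr irrational_sqrt_two.ne_one

theorem projCoords_dotProduct_cross (a b c : Pt) :
    projCoords a ⬝ᵥ projCoords b ⨯₃ projCoords c =
      (√2 - 1) * ((b 0 - a 0) * (c 1 - a 1) - (b 1 - a 1) * (c 0 - a 0)) := by
  simp [projCoords, cross_apply, dotProduct, Fin.sum_univ_three]
  ring

theorem projCoords_dotProduct_cross_eq_zero {a b p : Pt} (hp : p ∈ lineThrough a b) :
    projCoords p ⬝ᵥ projCoords a ⨯₃ projCoords b = 0 := by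
  obtain ⟨t, rfl⟩ := hp
  rw [projCoords_dotProduct_cross]
  simp only [PiLp.add_apply, PiLp.smul_apply, PiLp.sub_apply, smul_eq_mul]
  ring

theorem eq_zero_of_smul_projCoords_eq {c d : Pt} {α β : ℝ} (hcd : c ≠ d)
    (h : α • projCoords c = β • projCoords d) : α = 0 := by
  have h0 : α * ((√2 - 1) * c 0) = β * ((√2 - 1) * d 0) := by
    simpa [projCoords] using congrFun h 0
  have h1 : α * c 1 = β * d 1 := by simpa [projCoords] using congrFun h 1
  have h2 : α * (1 + (√2 - 2) * c 0) = β * (1 + (√2 - 2) * d 0) := by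
    simpa [projCoords] using congrFun h 2
  have h0' : α * c 0 = β * d 0 :=
    mul_left_cancel₀ sqrt_two_sub_one_ne_zero (by linear_combination h0)
  have hαβ : α = β := by linear_combination h2 - (√2 - 2) * h0'
  subst hαβ
  by_contra hα
  exact hcd (Pt.ext' (mul_left_cancel₀ hα h0') (mul_left_cancel₀ hα h1))

theorem parallelDir_of_cross_eq_zero {a b c d : Pt} (hab : a ≠ b)
    (h : (b 0 - a 0) * (d 1 - c 1) - (b 1 - a 1) * (d 0 - c 0) = 0) : ParallelDir a b c d := by
  by_cases h0 : b 0 - a 0 = 0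
  · have h1 : b 1 - a 1 ≠ 0 := fun h1 => hab (Pt.ext' (by linarith) (by linarith))
    refine ⟨(d 1 - c 1) / (b 1 - a 1), ?_⟩
    apply Pt.ext' <;> simp only [PiLp.sub_apply, PiLp.smul_apply, smul_eq_mul] <;>
      rw [div_mul_eq_mul_div, eq_div_iff h1]
    linear_combination -h
  · refine ⟨(d 0 - c 0) / (b 0 - a 0), ?_⟩
    apply Pt.ext' <;> simp only [PiLp.sub_apply, PiLp.smul_apply, smul_eq_mul] <;>
      rw [div_mul_eq_mul_div, eq_div_iff h0]
    linear_combination h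

theorem cross_cross_projCoords_ne_zero {a b c d : Pt} (hab : a ≠ b) (hcd : c ≠ d)
    (hpar : ¬ ParallelDir a b c d) :
    (projCoords a ⨯₃ projCoords b) ⨯₃ (projCoords c ⨯₃ projCoords d) ≠ 0 := by
  -- By the vector triple product formula it vanishes only if `c` and `d` both lie on `ab`.
  intro h
  rw [cross_cross_eq_smul_sub_smul', sub_eq_zero] at h
  have hd := eq_zero_of_smul_projCoords_eq hcd h
  have hc := eq_zero_of_smul_projCoords_eq hcd.symm h.symm
  rw [dotProduct_comm, projCoords_dotProduct_cross] at hd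
  rw [projCoords_dotProduct_cross] at hc
  refine hpar (parallelDir_of_cross_eq_zero hab ?_)
  apply mul_left_cancel₀ sqrt_two_sub_one_ne_zero
  linear_combination hd - hc

theorem lineClosed_projRatPoints : LineClosed projRatPoints :=
  fun _ _ _ _ h1 h2 h3 h4 h12 h34 _ hpar _ hp12 hp34 =>
    IsRationalRay.of_dotProduct_eq_zero (h1.cross h2) (h3.cross h4)
      (cross_cross_projCoords_ne_zero h12 h34 hpar)
      (by rw [dotProduct_comm]; exact projCoords_dotProduct_cross_eq_zero hp12)
      (by rw [dotProduct_comm]; exact projCoords_dotProduct_cross_eq_zero hp34)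

@[simp]
theorem projCoords_pt (x y : ℝ) :
    projCoords (pt x y) = ![(√2 - 1) * x, y, 1 + (√2 - 2) * x] := by
  simp [projCoords, pt]

theorem pt_zero_zero_mem : pt 0 0 ∈ projRatPoints :=
  ⟨1, ![0, 0, 1], by ext i; fin_cases i <;> simp⟩

theorem pt_one_zero_mem : pt 1 0 ∈ projRatPoints :=
  ⟨√2 - 1, ![1, 0, 1], by ext i; fin_cases i <;> simp; ring⟩

theorem pt_half_zero_not_mem : pt (1 / 2) 0 ∉ projRatPoints := by
  rintro ⟨c, q, h⟩
  have h0 : (√2 - 1) * (1 / 2) = c * q 0 := by simpa using congrFun h 0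
  have h2 : 1 + (√2 - 2) * (1 / 2) = c * q 2 := by simpa using congrFun h 2
  have hc : c * ((q 2 : ℝ) - q 0) = 1 / 2 := by linear_combination h0 - h2
  have hq : (q 2 : ℝ) - q 0 ≠ 0 := right_ne_zero_of_mul (hc.trans_ne one_half_pos.ne')
  refine irrational_sqrt_two ⟨q 2 / (q 2 - q 0), ?_⟩
  rw [Rat.cast_div, Rat.cast_sub, div_eq_iff hq]
  apply mul_left_cancel₀ (left_ne_zero_of_mul (hc.trans_ne one_half_pos.ne'))
  linear_combination -h2 - √2 * hc

/-- `φ⁻¹` in affine coordinates: the point whose `projCoords` are proportional to `(z.1, z.2, 1)`.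
-/
def projCoordsInv (z : ℝ × ℝ) : Pt :=
  pt ((1 + √2) * z.1 / (√2 * z.1 + 1)) (z.2 / (√2 * z.1 + 1))

theorem projCoords_projCoordsInv {z : ℝ × ℝ} (hz : √2 * z.1 + 1 ≠ 0) :
    projCoords (projCoordsInv z) = (√2 * z.1 + 1)⁻¹ • ![z.1, z.2, 1] := by
  have h2 : √2 ^ 2 = 2 := Real.sq_sqrt zero_le_two
  ext i
  fin_cases i <;> simp [projCoordsInv] <;> field_simp <;> linear_combination z.1 * h2

theorem sqrt_two_mul_ratCast_add_one_ne_zero (x : ℚ) : √2 * x + 1 ≠ 0 := by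
  intro h
  have hx : (x : ℝ) ≠ 0 := by rintro hx; simp [hx] at h
  exact irrational_sqrt_two ⟨-1 / x, by push_cast; field_simp; linear_combination -h⟩

theorem projCoordsInv_ratCast_mem (x y : ℚ) : projCoordsInv (x, y) ∈ projRatPoints := by
  refine ⟨(√2 * x + 1)⁻¹, ![x, y, 1], ?_⟩
  rw [projCoords_projCoordsInv (sqrt_two_mul_ratCast_add_one_ne_zero x)]
  congr
  ext i
  fin_cases i <;> simp

theorem continuousAt_projCoordsInv {z : ℝ × ℝ} (hz : √2 * z.1 + 1 ≠ 0) :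
    ContinuousAt projCoordsInv z := by
  have hpt : Continuous fun w : ℝ × ℝ => pt w.1 w.2 :=
    (PiLp.continuous_toLp 2 _).comp (by fun_prop)
  exact hpt.continuousAt.comp
    (f := fun w : ℝ × ℝ => ((1 + √2) * w.1 / (√2 * w.1 + 1), w.2 / (√2 * w.1 + 1)))
    (by fun_prop (disch := exact hz))

theorem sqrt_two_mul_div_add_one {p : Pt} (hp : projCoords p 2 ≠ 0) :
    √2 * (projCoords p 0 / projCoords p 2) + 1 = (projCoords p 2)⁻¹ := by
  have h2 : √2 ^ 2 = 2 := Real.sq_sqrt zero_le_two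
  field_simp
  simp only [projCoords, cons_val_zero, cons_val_two, tail_cons, head_cons]
  linear_combination p 0 * h2

theorem projCoordsInv_projCoords {p : Pt} (hp : projCoords p 2 ≠ 0) :
    projCoordsInv (projCoords p 0 / projCoords p 2, projCoords p 1 / projCoords p 2) = p := by
  have h2 : √2 ^ 2 = 2 := Real.sq_sqrt zero_le_two
  apply Pt.ext' <;>
    simp only [projCoordsInv, sqrt_two_mul_div_add_one hp, div_inv_eq_mul, mul_assoc,
      div_mul_cancel₀ _ hp]
  · simp [pt, projCoords]
    linear_combination p 0 * h2
  · simp [pt, projCoords]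

theorem mem_closure_projRatPoints {p : Pt} (hp : projCoords p 2 ≠ 0) :
    p ∈ closure projRatPoints := by
  have hz : √2 * (projCoords p 0 / projCoords p 2) + 1 ≠ 0 := by
    rw [sqrt_two_mul_div_add_one hp]
    exact inv_ne_zero hp
  have hdense : DenseRange fun q : ℚ × ℚ => ((q.1 : ℝ), (q.2 : ℝ)) :=
    Rat.denseRange_cast.prodMap Rat.denseRange_cast
  rw [← projCoordsInv_projCoords hp]
  refine closure_mono ?_
    (mem_closure_image (continuousAt_projCoordsInv hz) (hdense.closure_eq ▸ Set.mem_univ _))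
  rintro _ ⟨_, ⟨q, rfl⟩, rfl⟩
  exact projCoordsInv_ratCast_mem q.1 q.2

theorem dense_projCoords_two_ne_zero : Dense {p : Pt | projCoords p 2 ≠ 0} := by
  have hsub : {x : ℝ | 1 + (√2 - 2) * x = 0}.Subsingleton :=
    fun x (hx : 1 + (√2 - 2) * x = 0) y (hy : 1 + (√2 - 2) * y = 0) =>
      mul_left_cancel₀ (sub_ne_zero.mpr (irrational_sqrt_two.ne_ofNat 2))
        (by linear_combination hx - hy)
  exact (hsub.countable.dense_compl ℝ).preimage (PiLp.isOpenMap_apply 2 _ 0)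

theorem dense_projRatPoints : Dense projRatPoints :=
  dense_closure.mp (dense_projCoords_two_ne_zero.mono fun _ => mem_closure_projRatPoints)

/-- The midpoint of the segment [(0,0), (1,0)] cannot be constructed with only a straightedge:
there is a dense, line-closed set S containing (0,0) and (1,0) but not (1/2, 0). -/
theorem midpoint_not_constructible :
    ∃ S : Set Pt, Dense S ∧ LineClosed S ∧
      pt 0 0 ∈ S ∧ pt 1 0 ∈ S ∧ pt (1 / 2) 0 ∉ S :=
  ⟨projRatPoints, dense_projRatPoints, lineClosed_projRatPoints, pt_zero_zero_mem,
    pt_one_zero_mem, pt_half_zero_not_mem⟩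
end
end

section
/- Let C = {p ∈ ℝ² : dist(p, (0,0)) = 1} be the unit circle. There exists a set Σ ⊆ ℝ² such that: Σ is dense in ℝ²; Σ is line-closed; Σ is closed under intersections with C; and (0, 0) ∉ Σ. (Hence the center of a circle cannot be constructed with only a straightedge — Hilbert's theorem.) -/
noncomputable section

/-! A projective transformation of the plane that preserves the unit circle maps lines to lines
and the circle to itself. The points whose homogeneous coordinates are proportional to a vector
over a subfield `F ⊆ ℝ` form a dense set which is line-closed (intersections are cross products)
and, once `F` is closed under square roots, closed under intersections with the circle (a
quadratic equation over `F`). Pulling this set back along the transformation `boost μ`, which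
fixes the cone `x² + y² = z²`, keeps all three properties, while the centre `(0, 0)` lands on
`(1 - μ², 0, 1 + μ²)`, which is defined over `F` only if `μ ∈ F`. Take `F` the real algebraic
numbers and `μ` a Liouville number. -/

open Matrix Topology

lemma vec3_ext {u v : Fin 3 → ℝ} (h0 : u 0 = v 0) (h1 : u 1 = v 1) (h2 : u 2 = v 2) : u = v := by
  ext i; fin_cases i <;> assumption

def homog (p : Pt) : Fin 3 → ℝ := ![p 0, p 1, 1]

def dehomog (v : Fin 3 → ℝ) : Pt := pt (v 0 / v 2) (v 1 / v 2)

def circleForm (v : Fin 3 → ℝ) : ℝ := v 0 ^ 2 + v 1 ^ 2 - v 2 ^ 2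

lemma homog_dehomog {v : Fin 3 → ℝ} (hv : v 2 ≠ 0) : homog (dehomog v) = (v 2)⁻¹ • v := by
  ext i; fin_cases i <;> simp [homog, dehomog, pt, div_eq_inv_mul, hv]

lemma dehomog_homog (p : Pt) : dehomog (homog p) = p := by
  ext i; fin_cases i <;> simp [homog, dehomog, pt]

lemma continuousAt_dehomog {v : Fin 3 → ℝ} (hv : v 2 ≠ 0) : ContinuousAt dehomog v := by
  unfold dehomog pt
  rw [WithLp.equiv_symm_apply]
  exact (PiLp.continuous_toLp 2 _).continuousAt.comp (by fun_prop (disch := exact hv))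

lemma mem_lineThrough_iff {a b q : Pt} (hab : a ≠ b) :
    q ∈ lineThrough a b ↔ homog a ⨯₃ homog b ⬝ᵥ homog q = 0 := by
  have htriple : homog a ⨯₃ homog b ⬝ᵥ homog q
      = (b 0 - a 0) * (q 1 - a 1) - (b 1 - a 1) * (q 0 - a 0) := by
    simp only [homog, cross_apply, vec3_dotProduct, cons_val]
    ring
  rw [htriple]
  constructor
  · rintro ⟨t, rfl⟩
    simp only [PiLp.add_apply, PiLp.smul_apply, PiLp.sub_apply, smul_eq_mul]
    ring
  · intro h
    have hba : b 0 - a 0 ≠ 0 ∨ b 1 - a 1 ≠ 0 := by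
      by_contra! hc
      exact hab (PiLp.ext (Fin.forall_fin_two.2 ⟨by linarith [hc.1], by linarith [hc.2]⟩))
    rcases hba with hba | hba
    · refine ⟨(q 0 - a 0) / (b 0 - a 0), PiLp.ext (Fin.forall_fin_two.2 ⟨?_, ?_⟩)⟩ <;>
        simp only [PiLp.add_apply, PiLp.smul_apply, PiLp.sub_apply, smul_eq_mul] <;> field_simp
      · ring
      · linear_combination h
    · refine ⟨(q 1 - a 1) / (b 1 - a 1), PiLp.ext (Fin.forall_fin_two.2 ⟨?_, ?_⟩)⟩ <;>
        simp only [PiLp.add_apply, PiLp.smul_apply, PiLp.sub_apply, smul_eq_mul] <;> field_simp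
      · linear_combination -h
      · ring

lemma homog_cross_ne_zero {a b : Pt} (hab : a ≠ b) : homog a ⨯₃ homog b ≠ 0 := by
  intro h
  have h0 := congrFun h 0
  have h1 := congrFun h 1
  simp only [homog, cross_apply, cons_val, mul_one, one_mul,
    Pi.zero_apply, sub_eq_zero] at h0 h1
  exact hab (PiLp.ext (Fin.forall_fin_two.2 ⟨h1.symm, h0⟩))

lemma circleForm_homog_eq_zero_iff {p : Pt} :
    circleForm (homog p) = 0 ↔ dist p (pt 0 0) = 1 := by
  have h00 : pt 0 0 = 0 := by ext i; fin_cases i <;> rfl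
  rw [h00, dist_zero_right, EuclideanSpace.norm_eq, Real.sqrt_eq_one, Fin.sum_univ_two]
  simp [circleForm, homog, sub_eq_zero]

section Rational

variable {F : Subfield ℝ}

def RationalOver (F : Subfield ℝ) (v : Fin 3 → ℝ) : Prop :=
  ∃ k : ℝ, ∃ w : Fin 3 → ℝ, (∀ i, w i ∈ F) ∧ v = k • w

lemma vec3_mem {a b c : ℝ} (ha : a ∈ F) (hb : b ∈ F) (hc : c ∈ F) : ∀ i, ![a, b, c] i ∈ F := by
  intro i; fin_cases i <;> assumption

lemma RationalOver.smul {v : Fin 3 → ℝ} (hv : RationalOver F v) (k : ℝ) :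
    RationalOver F (k • v) := by
  obtain ⟨l, w, hw, rfl⟩ := hv
  exact ⟨k * l, w, hw, smul_smul k l w⟩

lemma RationalOver.cross {u v : Fin 3 → ℝ} (hu : RationalOver F u) (hv : RationalOver F v) :
    RationalOver F (u ⨯₃ v) := by
  obtain ⟨k, u, hu, rfl⟩ := hu
  obtain ⟨l, v, hv, rfl⟩ := hv
  refine ⟨k * l, u ⨯₃ v, ?_, by simp [smul_smul, mul_comm]⟩
  rw [cross_apply]
  exact vec3_mem (sub_mem (mul_mem (hu 1) (hv 2)) (mul_mem (hu 2) (hv 1)))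
    (sub_mem (mul_mem (hu 2) (hv 0)) (mul_mem (hu 0) (hv 2)))
    (sub_mem (mul_mem (hu 0) (hv 1)) (mul_mem (hu 1) (hv 0)))

lemma exists_smul_eq_of_cross_eq_zero {u v : Fin 3 → ℝ} (hu : u ≠ 0) (h : u ⨯₃ v = 0) :
    ∃ k : ℝ, k • u = v := by
  have hdep := mt crossProduct_ne_zero_iff_linearIndependent.2 (not_not.2 h)
  rw [LinearIndependent.pair_iff' hu] at hdep
  simpa using hdep

lemma RationalOver.of_dotProduct_eq_zero {n m v : Fin 3 → ℝ} (hn : RationalOver F n)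
    (hm : RationalOver F m) (hnm : n ⨯₃ m ≠ 0) (hnv : n ⬝ᵥ v = 0) (hmv : m ⬝ᵥ v = 0) :
    RationalOver F v := by
  have hcross : n ⨯₃ m ⨯₃ v = 0 := by
    rw [cross_cross_eq_smul_sub_smul, hnv, hmv, zero_smul, zero_smul, sub_zero]
  obtain ⟨k, rfl⟩ := exists_smul_eq_of_cross_eq_zero hnm hcross
  exact (hn.cross hm).smul k

lemma mem_of_quadratic_eq_zero (hF : ∀ x : ℝ, x ^ 2 ∈ F → x ∈ F) {a b c x : ℝ} (ha : a ∈ F)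
    (hb : b ∈ F) (hc : c ∈ F) (hne : a ≠ 0 ∨ b ≠ 0) (h : a * (x * x) + b * x + c = 0) :
    x ∈ F := by
  rcases eq_or_ne a 0 with rfl | ha0
  · have hb0 : b ≠ 0 := hne.resolve_left (not_not.2 rfl)
    have hx : x = -c / b := by field_simp; linear_combination h
    rw [hx]
    exact div_mem (neg_mem hc) hb
  · have hdisc : (2 * a * x + b) ^ 2 ∈ F := by
      rw [← discrim_eq_sq_of_quadratic_eq_zero h, discrim]
      exact sub_mem (pow_mem hb 2) (mul_mem (mul_mem (ofNat_mem F 4) ha) hc)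
    have hx : x = ((2 * a * x + b) - b) / (2 * a) := by field_simp; ring
    rw [hx]
    exact div_mem (sub_mem (hF _ hdisc) hb) (mul_mem (ofNat_mem F 2) ha)

lemma eq_smul_of_circleForm_eq_zero {v : Fin 3 → ℝ} (hv : circleForm v = 0)
    (h : v 0 + v 2 ≠ 0) :
    letI u := v 1 / (v 0 + v 2)
    v = ((v 0 + v 2) / 2) • ![1 - u ^ 2, 2 * u, 1 + u ^ 2] := by
  rw [circleForm] at hv
  refine vec3_ext ?_ ?_ ?_ <;>
    simp only [Pi.smul_apply, smul_eq_mul, cons_val] <;> field_simp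
  · linear_combination hv
  · linear_combination -hv

lemma RationalOver.of_circleForm_eq_zero (hF : ∀ x : ℝ, x ^ 2 ∈ F → x ∈ F)
    {n v : Fin 3 → ℝ} (hn : RationalOver F n) (hn0 : n ≠ 0) (hnv : n ⬝ᵥ v = 0)
    (hv : circleForm v = 0) : RationalOver F v := by
  obtain ⟨k, m, hm, rfl⟩ := hn
  have hk : k ≠ 0 := by rintro rfl; simp at hn0
  have hm0 : m ≠ 0 := by rintro rfl; simp at hn0
  have hmv : m ⬝ᵥ v = 0 := by simpa [smul_dotProduct, hk] using hnv
  rcases eq_or_ne (v 0 + v 2) 0 with hv02 | hv02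
  · have hv1 : v 1 = 0 := by
      rw [circleForm] at hv
      exact pow_eq_zero_iff two_ne_zero |>.1 (by linear_combination hv - (v 0 - v 2) * hv02)
    refine ⟨v 2, ![-1, 0, 1], vec3_mem (neg_mem (one_mem F)) (zero_mem F) (one_mem F), ?_⟩
    refine vec3_ext ?_ ?_ ?_ <;>
      simp only [Pi.smul_apply, smul_eq_mul, cons_val]
    · linarith
    · rw [hv1, mul_zero]
    · rw [mul_one]
  · set u := v 1 / (v 0 + v 2)
    have hpar := eq_smul_of_circleForm_eq_zero hv hv02
    have hquad : (m 2 - m 0) * (u * u) + 2 * m 1 * u + (m 0 + m 2) = 0 := by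
      rw [hpar, dotProduct_smul, smul_eq_mul, mul_eq_zero] at hmv
      have hpar_dot := hmv.resolve_left (div_ne_zero hv02 two_ne_zero)
      simp only [dotProduct, Fin.sum_univ_three, cons_val]
        at hpar_dot
      linear_combination hpar_dot
    have hne : m 2 - m 0 ≠ 0 ∨ 2 * m 1 ≠ 0 := by
      by_contra! hc
      have h02 : m 0 + m 2 = 0 := by simpa [hc.1, hc.2] using hquad
      exact hm0 (vec3_ext (show m 0 = 0 by linarith [hc.1]) (show m 1 = 0 by linarith [hc.2])
        (show m 2 = 0 by linarith [hc.1]))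
    have hu : u ∈ F := mem_of_quadratic_eq_zero hF (sub_mem (hm 2) (hm 0))
      (mul_mem (ofNat_mem F 2) (hm 1)) (add_mem (hm 0) (hm 2)) hne hquad
    exact ⟨_, _, vec3_mem (sub_mem (one_mem F) (pow_mem hu 2))
      (mul_mem (ofNat_mem F 2) hu) (add_mem (one_mem F) (pow_mem hu 2)), hpar⟩

end Rational

lemma cross_mulVec_dotProduct_mulVec {R : Type*} [CommRing R] (A : Matrix (Fin 3) (Fin 3) R)
    (u v w : Fin 3 → R) :
    (A *ᵥ u) ⨯₃ (A *ᵥ v) ⬝ᵥ (A *ᵥ w) = A.det * (u ⨯₃ v ⬝ᵥ w) := by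
  have hrows : (Matrix.of ![A *ᵥ w, A *ᵥ u, A *ᵥ v]) = Matrix.of ![w, u, v] * Aᵀ := by
    ext i j; fin_cases i <;> simp [Matrix.mul_apply, mulVec, dotProduct, mul_comm]
  rw [dotProduct_comm, triple_product_eq_det, dotProduct_comm, triple_product_eq_det]
  change (Matrix.of ![A *ᵥ w, A *ᵥ u, A *ᵥ v]).det = _
  rw [hrows, det_mul, det_transpose, mul_comm]
  rfl

section RationalPoints

variable {F : Subfield ℝ} {A : Matrix (Fin 3) (Fin 3) ℝ}

def rationalPoints (F : Subfield ℝ) (A : Matrix (Fin 3) (Fin 3) ℝ) : Set Pt :=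
  {p | RationalOver F (A *ᵥ homog p)}

lemma cross_mulVec_ne_zero (hA : A.det ≠ 0) {u v : Fin 3 → ℝ} (h : u ⨯₃ v ≠ 0) :
    (A *ᵥ u) ⨯₃ (A *ᵥ v) ≠ 0 := by
  intro h0
  have htriple := cross_mulVec_dotProduct_mulVec A u v (u ⨯₃ v)
  rw [h0, zero_dotProduct] at htriple
  exact mul_ne_zero hA (dotProduct_self_eq_zero.not.2 h) htriple.symm

lemma mem_lineThrough_iff_mulVec (hA : A.det ≠ 0) {a b q : Pt} (hab : a ≠ b) :
    q ∈ lineThrough a b ↔ (A *ᵥ homog a) ⨯₃ (A *ᵥ homog b) ⬝ᵥ (A *ᵥ homog q) = 0 := by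
  rw [mem_lineThrough_iff hab, cross_mulVec_dotProduct_mulVec, mul_eq_zero, or_iff_right hA]

lemma lineClosed_rationalPoints (hA : A.det ≠ 0) : LineClosed (rationalPoints F A) := by
  intro b1 b2 b3 b4 h1 h2 h3 h4 h12 h34 hne _ p hp12 hp34
  rw [mem_lineThrough_iff_mulVec hA h12] at hp12
  rw [mem_lineThrough_iff_mulVec hA h34] at hp34
  set n := (A *ᵥ homog b1) ⨯₃ (A *ᵥ homog b2)
  set m := (A *ᵥ homog b3) ⨯₃ (A *ᵥ homog b4)
  have hn : n ≠ 0 := cross_mulVec_ne_zero hA (homog_cross_ne_zero h12)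
  have hm : m ≠ 0 := cross_mulVec_ne_zero hA (homog_cross_ne_zero h34)
  have hnm : n ⨯₃ m ≠ 0 := by
    intro h0
    obtain ⟨k, hk⟩ := exists_smul_eq_of_cross_eq_zero hn h0
    have hk0 : k ≠ 0 := by rintro rfl; exact hm (by rw [← hk, zero_smul])
    apply hne
    ext q
    rw [mem_lineThrough_iff_mulVec hA h12, mem_lineThrough_iff_mulVec hA h34]
    change n ⬝ᵥ _ = 0 ↔ m ⬝ᵥ _ = 0
    rw [← hk, smul_dotProduct, smul_eq_mul, mul_eq_zero, or_iff_right hk0]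
  exact (h1.cross h2).of_dotProduct_eq_zero (h3.cross h4) hnm hp12 hp34

lemma intClosed_rationalPoints (hF : ∀ x : ℝ, x ^ 2 ∈ F → x ∈ F) (hA : A.det ≠ 0)
    (hAQ : ∀ v, circleForm v = 0 → circleForm (A *ᵥ v) = 0) :
    IntClosed (rationalPoints F A) {p : Pt | dist p (pt 0 0) = 1} := by
  intro b1 b2 h1 h2 h12 p hpC hp
  exact (h1.cross h2).of_circleForm_eq_zero hF
    (cross_mulVec_ne_zero hA (homog_cross_ne_zero h12))
    ((mem_lineThrough_iff_mulVec hA h12).1 hp) (hAQ _ (circleForm_homog_eq_zero_iff.2 hpC))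

lemma dense_rationalPoints (hA : A.det ≠ 0) : Dense (rationalPoints F A) := by
  have hFdense : Dense (Set.univ.pi fun _ : Fin 3 => (F : Set ℝ)) := dense_pi _ fun _ _ =>
    Rat.denseRange_cast.mono (Set.range_subset_iff.2 (SubfieldClass.ratCast_mem F))
  intro x
  rw [mem_closure_iff_nhds]
  intro t ht
  set w₀ := A *ᵥ homog x
  have hinv : A⁻¹ *ᵥ w₀ = homog x := by
    rw [mulVec_mulVec, nonsing_inv_mul _ (isUnit_iff_ne_zero.2 hA), one_mulVec]
  have hcont : ContinuousAt (fun w => dehomog (A⁻¹ *ᵥ w)) w₀ :=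
    (continuousAt_dehomog (by simp [hinv, homog])).comp
      (continuous_const.matrix_mulVec continuous_id).continuousAt
  have hU : {w | (A⁻¹ *ᵥ w) 2 ≠ 0} ∩ (fun w => dehomog (A⁻¹ *ᵥ w)) ⁻¹' t ∈ 𝓝 w₀ := by
    refine Filter.inter_mem ?_ (hcont.preimage_mem_nhds (by rwa [hinv, dehomog_homog]))
    refine (isOpen_ne_fun ?_ continuous_const).mem_nhds (by simp [hinv, homog])
    exact (continuous_apply 2).comp (continuous_const.matrix_mulVec continuous_id)
  obtain ⟨w, hwF, hw2, hwt⟩ := hFdense.inter_nhds_nonempty hU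
  refine ⟨_, hwt, ?_⟩
  change RationalOver F (A *ᵥ homog (dehomog (A⁻¹ *ᵥ w)))
  rw [homog_dehomog hw2, mulVec_smul, mulVec_mulVec, mul_nonsing_inv _ (isUnit_iff_ne_zero.2 hA),
    one_mulVec]
  exact ⟨_, w, fun i => hwF i trivial, rfl⟩

end RationalPoints

section Boost

variable {F : Subfield ℝ} {μ : ℝ}

/-- On the parametrization `(1 - u², 2u, 1 + u²)` of the cone `x² + y² = z²` this acts as
`u ↦ μ u`, up to the factor `2`. -/
def boost (μ : ℝ) : Matrix (Fin 3) (Fin 3) ℝ :=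
  !![1 + μ ^ 2, 0, 1 - μ ^ 2; 0, 2 * μ, 0; 1 - μ ^ 2, 0, 1 + μ ^ 2]

lemma det_boost : (boost μ).det = 8 * μ ^ 3 := by
  simp only [boost, det_fin_three, of_apply, cons_val', cons_val, cons_val_fin_one]
  ring

lemma circleForm_boost_mulVec (v : Fin 3 → ℝ) :
    circleForm (boost μ *ᵥ v) = 4 * μ ^ 2 * circleForm v := by
  simp only [boost, circleForm, mulVec, dotProduct, Fin.sum_univ_three, of_apply, cons_val',
    cons_val, cons_val_fin_one]
  ring

lemma pt_zero_notMem_rationalPoints_boost (hF : ∀ x : ℝ, x ^ 2 ∈ F → x ∈ F) (hμ : μ ∉ F) :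
    pt 0 0 ∉ rationalPoints F (boost μ) := by
  rintro ⟨k, w, hw, hkw⟩
  have h0 : 1 - μ ^ 2 = k * w 0 := by simpa [boost, homog, pt] using congrFun hkw 0
  have h2 : 1 + μ ^ 2 = k * w 2 := by simpa [boost, homog, pt] using congrFun hkw 2
  have hk : k * (w 2 + w 0) = 2 := by linear_combination -h2 - h0
  have hsum : w 2 + w 0 ≠ 0 := right_ne_zero_of_mul (hk ▸ two_ne_zero)
  have hμsq : μ ^ 2 = (w 2 - w 0) / (w 2 + w 0) := by
    rw [eq_div_iff hsum]
    refine mul_left_cancel₀ (left_ne_zero_of_mul (hk ▸ two_ne_zero)) ?_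
    linear_combination μ ^ 2 * hk + h2 - h0
  exact hμ (hF μ (hμsq ▸ div_mem (sub_mem (hw 2) (hw 0)) (add_mem (hw 2) (hw 0))))

theorem exists_dense_lineClosed_intClosed_center_notMem (hF : ∀ x : ℝ, x ^ 2 ∈ F → x ∈ F)
    (hμ : μ ∉ F) :
    ∃ S : Set Pt, Dense S ∧ LineClosed S ∧
      IntClosed S {p : Pt | dist p (pt 0 0) = 1} ∧ pt 0 0 ∉ S := by
  have hdet : (boost μ).det ≠ 0 := by
    rw [det_boost]
    exact mul_ne_zero (by norm_num) (pow_ne_zero 3 (ne_of_mem_of_not_mem (zero_mem F) hμ).symm)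
  refine ⟨rationalPoints F (boost μ), dense_rationalPoints hdet, lineClosed_rationalPoints hdet,
    intClosed_rationalPoints hF hdet fun v hv => ?_, pt_zero_notMem_rationalPoints_boost hF hμ⟩
  rw [circleForm_boost_mulVec, hv, mul_zero]

end Boost

lemma liouvilleNumber_notMem_algebraicClosure :
    liouvilleNumber 3 ∉ algebraicClosure ℚ ℝ := fun h =>
  transcendental_liouvilleNumber (by norm_num)
    ((IsFractionRing.isAlgebraic_iff ℤ ℚ ℝ).2 (mem_algebraicClosure_iff.1 h))

/-- **Hilbert's theorem.** The center of a circle cannot be constructed with only a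
straightedge: there is a dense, line-closed set S, closed under intersections with the unit
circle, that does not contain the center (0,0). -/
theorem center_of_circle_not_constructible :
    ∃ S : Set Pt, Dense S ∧ LineClosed S ∧
      IntClosed S {p : Pt | dist p (pt 0 0) = 1} ∧ pt 0 0 ∉ S :=
  exists_dense_lineClosed_intClosed_center_notMem (F := (algebraicClosure ℚ ℝ).toSubfield)
    (fun _ hx => mem_algebraicClosure_iff.2 ((mem_algebraicClosure_iff.1 hx).of_pow two_pos))
    liouvilleNumber_notMem_algebraicClosure
end
end

section
/- Let Σ = {(x, x + √3 · y) : x, y ∈ ℚ} ⊆ ℝ². Then Σ is dense in ℝ², and for all points p1, p2, p3, p4 ∈ Σ with p1 ≠ p2 and p3 ≠ p4, the Euclidean inner product of the direction vectors satisfies ⟪p2 − p1, p4 − p3⟫ ≠ 0; in particular, no two lines each passing through two distinct points of Σ are perpendicular. (Hence a pair of perpendicular lines cannot be constructed using only a straightedge.) -/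
/-!
Σ is the image of the dense set ℚ × ℚ under a linear bijection of ℝ², hence dense. Two direction
vectors of Σ have the form (a, a + √3 b) and (e, e + √3 f) with a, b, e, f rational, and their
inner product is (2ae + 3bf) + √3 (af + be). Since √3 is irrational both parts vanish; this is a
linear system in (e, f) with determinant 2a² − 3b², which is nonzero unless a = b = 0 because 3/2
is not the square of a rational.
-/
noncomputable section

open scoped RealInnerProductSpace

def shearPt (c x y : ℝ) : Pt := pt x (x + c * y)

lemma continuous_shearPt (c : ℝ) : Continuous fun q : ℝ × ℝ => shearPt c q.1 q.2 := by
  unfold shearPt pt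
  exact (PiLp.continuous_toLp 2 _).comp (by fun_prop)

lemma shearPt_surjective {c : ℝ} (hc : c ≠ 0) :
    Function.Surjective fun q : ℝ × ℝ => shearPt c q.1 q.2 := by
  intro p
  refine ⟨(p 0, (p 1 - p 0) / c), ?_⟩
  ext i
  fin_cases i <;>
    simp only [shearPt, pt, WithLp.equiv_symm_apply, Fin.zero_eta, Fin.mk_one, Fin.isValue,
      Matrix.cons_val_zero, Matrix.cons_val_one, Matrix.cons_val_fin_one]
  field_simp
  ring

lemma dense_shearPt_rat {c : ℝ} (hc : c ≠ 0) :
    Dense {p : Pt | ∃ x y : ℚ, p = shearPt c x y} := by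
  have h : DenseRange fun q : ℚ × ℚ => shearPt c q.1 q.2 :=
    (shearPt_surjective hc).denseRange.comp (Rat.denseRange_cast.prodMap Rat.denseRange_cast)
      (continuous_shearPt c)
  refine h.mono ?_
  rintro _ ⟨⟨x, y⟩, rfl⟩
  exact ⟨x, y, rfl⟩

lemma shearPt_sub_shearPt (c a b e f : ℝ) :
    shearPt c a b - shearPt c e f = shearPt c (a - e) (b - f) := by
  ext i
  fin_cases i <;>
    simp only [shearPt, pt, WithLp.equiv_symm_apply, Fin.zero_eta, Fin.mk_one, Fin.isValue,
      Matrix.cons_val_zero, Matrix.cons_val_one, Matrix.cons_val_fin_one, PiLp.sub_apply]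
  ring

lemma inner_shearPt (c a b e f : ℝ) :
    ⟪shearPt c a b, shearPt c e f⟫ = (2 * a * e + c ^ 2 * b * f) + c * (a * f + b * e) := by
  simp only [shearPt, pt, WithLp.equiv_symm_apply, PiLp.inner_apply, RCLike.inner_apply,
    Real.ringHom_apply, Fin.sum_univ_two, Fin.isValue, Matrix.cons_val_zero, Matrix.cons_val_one,
    Matrix.cons_val_fin_one]
  ring

lemma Irrational.eq_zero_of_ratCast_add_mul_ratCast {x : ℝ} (hx : Irrational x) {q r : ℚ}
    (h : q + x * r = 0) : q = 0 ∧ r = 0 := by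
  obtain rfl : r = 0 := by
    by_contra hr
    exact ((hx.mul_ratCast hr).ratCast_add q).ne_zero h
  simpa using h

lemma eq_zero_of_two_mul_sq_eq_three_mul_sq {a b : ℚ} (h : 2 * a ^ 2 = 3 * b ^ 2) : b = 0 := by
  by_contra hb
  have : ¬IsSquare (3 / 2 : ℚ) := by norm_num
  exact this ⟨a / b, by field_simp; linarith⟩

lemma inner_shearPt_sqrt_three_eq_zero {a b e f : ℚ}
    (h : ⟪shearPt √3 a b, shearPt √3 e f⟫ = 0) : a = 0 ∧ b = 0 ∨ e = 0 ∧ f = 0 := by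
  have hA : ((2 * a * e + 3 * b * f : ℚ) : ℝ) + √3 * ((a * f + b * e : ℚ) : ℝ) = 0 := by
    rw [inner_shearPt, Real.sq_sqrt (by norm_num)] at h
    push_cast
    linarith
  obtain ⟨hre, him⟩ := Nat.prime_three.irrational_sqrt.eq_zero_of_ratCast_add_mul_ratCast hA
  rcases eq_or_ne (2 * a ^ 2) (3 * b ^ 2) with hab | hab
  · have hb := eq_zero_of_two_mul_sq_eq_three_mul_sq hab
    subst hb
    left
    exact ⟨by simpa using hab, rfl⟩
  · have hd : 2 * a ^ 2 - 3 * b ^ 2 ≠ 0 := sub_ne_zero.2 hab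
    right
    constructor
    · refine (mul_eq_zero.1 ?_).resolve_left hd
      linear_combination a * hre - 3 * b * him
    · refine (mul_eq_zero.1 ?_).resolve_left hd
      linear_combination 2 * a * him - b * hre

/-- Perpendicular lines cannot be constructed by straightedge: the set
Σ = {(x, x + √3·y) : x, y ∈ ℚ} is dense in ℝ², and for any two pairs of distinct points of Σ
the inner product of the corresponding direction vectors is nonzero, so no two lines through
points of Σ are perpendicular. -/
theorem perpendicular_lines_not_constructible :
    Dense {p : Pt | ∃ x y : ℚ, p = pt x (x + Real.sqrt 3 * y)} ∧
    ∀ p1 p2 p3 p4 : Pt,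
      p1 ∈ {p : Pt | ∃ x y : ℚ, p = pt x (x + Real.sqrt 3 * y)} →
      p2 ∈ {p : Pt | ∃ x y : ℚ, p = pt x (x + Real.sqrt 3 * y)} →
      p3 ∈ {p : Pt | ∃ x y : ℚ, p = pt x (x + Real.sqrt 3 * y)} →
      p4 ∈ {p : Pt | ∃ x y : ℚ, p = pt x (x + Real.sqrt 3 * y)} →
      p1 ≠ p2 → p3 ≠ p4 → ⟪p2 - p1, p4 - p3⟫ ≠ 0 := by
  refine ⟨dense_shearPt_rat (by positivity), ?_⟩
  rintro _ _ _ _ ⟨x₁, y₁, rfl⟩ ⟨x₂, y₂, rfl⟩ ⟨x₃, y₃, rfl⟩ ⟨x₄, y₄, rfl⟩ h₁₂ h₃₄ h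
  change ⟪shearPt √3 x₂ y₂ - shearPt √3 x₁ y₁, shearPt √3 x₄ y₄ - shearPt √3 x₃ y₃⟫ = 0 at h
  simp only [shearPt_sub_shearPt, ← Rat.cast_sub] at h
  rcases inner_shearPt_sqrt_three_eq_zero h with ⟨hx, hy⟩ | ⟨hx, hy⟩
  · exact h₁₂ (by rw [sub_eq_zero.1 hx, sub_eq_zero.1 hy])
  · exact h₃₄ (by rw [sub_eq_zero.1 hx, sub_eq_zero.1 hy])
end
end

section
/- For all rational numbers a and b, (1 + a·√3) · (1 + b·√3) ≠ −1. -/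
/-! Expanding the product gives `(2 + 3ab) + (a + b)√3 = 0`. Since `√3` is irrational, both
rational coefficients vanish, so `b = -a` and `3a² = 2`; then `(3a)² = 6`, but `6` is not a
rational square. -/

theorem Irrational.eq_zero_of_ratCast_add_ratCast_mul_eq_zero {x : ℝ} (hx : Irrational x)
    {p q : ℚ} (h : (p : ℝ) + q * x = 0) : p = 0 ∧ q = 0 := by
  have hq : q = 0 := by
    by_contra hq
    exact ((hx.ratCast_mul hq).ratCast_add p).ne_rat 0 (by rw [h, Rat.cast_zero])
  refine ⟨?_, hq⟩
  simpa [hq] using h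

theorem Rat.three_mul_sq_ne_two (a : ℚ) : 3 * a ^ 2 ≠ 2 := by
  intro h
  have hsix : ¬ IsSquare (6 : ℚ) := by norm_num
  exact hsix ⟨3 * a, by linear_combination -3 * h⟩

/-- For all rationals a, b we have (1 + a√3)(1 + b√3) ≠ −1: the product of the slopes of two
lines through points of {(x, x + √3·y) : x, y ∈ ℚ} is never −1. -/
theorem slopes_product_ne_neg_one (a b : ℚ) :
    (1 + (a : ℝ) * Real.sqrt 3) * (1 + (b : ℝ) * Real.sqrt 3) ≠ -1 := by
  intro h
  have hsqrt : Real.sqrt 3 * Real.sqrt 3 = 3 := Real.mul_self_sqrt (by norm_num)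
  have hsplit : ((2 + 3 * a * b : ℚ) : ℝ) + ((a + b : ℚ) : ℝ) * Real.sqrt 3 = 0 := by
    push_cast
    linear_combination h - (a * b : ℝ) * hsqrt
  have hirr : Irrational (Real.sqrt 3) := by
    simpa using Nat.prime_three.irrational_sqrt
  obtain ⟨hprod, hsum⟩ := hirr.eq_zero_of_ratCast_add_ratCast_mul_eq_zero hsplit
  obtain rfl : b = -a := by linear_combination hsum
  exact Rat.three_mul_sq_ne_two a (by linear_combination -hprod)
end

section
/- Let K be a subfield of ℝ such that every nonnegative element of K has a square root in K (for all x ∈ K with x ≥ 0 there is y ∈ K with y² = x). Let p, q ∈ K × K be distinct points, and let z ∈ ℝ² be a point lying on the line through p and q and on the parabola {(x, x²) : x ∈ ℝ}. Then z ∈ K × K. -/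
/-!
On the line through `p` and `q`, with `d = q.1 - p.1` and `e = q.2 - p.2`, a point `(x, x²)`
satisfies `d x² - e x + (e p.1 - d p.2) = 0`. If `d = 0` the line is vertical and `x = p.1`;
otherwise `x` is a root of a quadratic with coefficients in `K`, whose discriminant
`(2 d x - e)²` is nonnegative and hence a square in `K`, so the quadratic formula keeps `x` in `K`.
-/

theorem Subfield.mem_of_quadratic_eq_zero {F : Type*} [Field F] [NeZero (2 : F)]
    (K : Subfield F) {a b c s x : F} (ha : a ∈ K) (hb : b ∈ K) (hs : s ∈ K) (ha0 : a ≠ 0)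
    (hdisc : discrim a b c = s * s) (hx : a * (x * x) + b * x + c = 0) : x ∈ K := by
  have h2a : 2 * a ∈ K := K.mul_mem (ofNat_mem K 2) ha
  rcases (quadratic_eq_zero_iff ha0 hdisc x).mp hx with rfl | rfl
  · exact K.div_mem (K.add_mem (K.neg_mem hb) hs) h2a
  · exact K.div_mem (K.sub_mem (K.neg_mem hb) hs) h2a

theorem Subfield.mem_of_quadratic_eq_zero_of_sqrt_mem (K : Subfield ℝ)
    (hK : ∀ x : ℝ, x ∈ K → 0 ≤ x → ∃ y ∈ K, y ^ 2 = x) {a b c x : ℝ}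
    (ha : a ∈ K) (hb : b ∈ K) (hc : c ∈ K) (ha0 : a ≠ 0)
    (hx : a * (x * x) + b * x + c = 0) : x ∈ K := by
  have hdisc_mem : discrim a b c ∈ K :=
    K.sub_mem (pow_mem hb 2) (K.mul_mem (K.mul_mem (ofNat_mem K 4) ha) hc)
  have hdisc_nonneg : 0 ≤ discrim a b c := by
    rw [discrim_eq_sq_of_quadratic_eq_zero hx]
    positivity
  obtain ⟨s, hs, hs_sq⟩ := hK _ hdisc_mem hdisc_nonneg
  exact K.mem_of_quadratic_eq_zero ha hb hs ha0 (by rw [← hs_sq, sq]) hx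

theorem quadratic_eq_zero_of_mem_line_of_snd_eq_sq {R : Type*} [CommRing R] {p q z : R × R}
    {t : R} (hz : z = p + t • (q - p)) (hparab : z.2 = z.1 ^ 2) :
    (q.1 - p.1) * (z.1 * z.1) + -(q.2 - p.2) * z.1 + ((q.2 - p.2) * p.1 - (q.1 - p.1) * p.2)
      = 0 := by
  have hz1 : z.1 = p.1 + t * (q.1 - p.1) := by simp [hz]
  have hz2 : z.2 = p.2 + t * (q.2 - p.2) := by simp [hz]
  rw [hz1] at hparab ⊢
  linear_combination (q.1 - p.1) * (hparab.symm.trans hz2)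

theorem sqrt_closed_field_closed_under_parabola_intersections_general (K : Subfield ℝ)
    (hK : ∀ x : ℝ, x ∈ K → 0 ≤ x → ∃ y ∈ K, y ^ 2 = x)
    (p q : ℝ × ℝ) (hp1 : p.1 ∈ K) (hp2 : p.2 ∈ K) (hq1 : q.1 ∈ K) (hq2 : q.2 ∈ K)
    (z : ℝ × ℝ)
    (hline : ∃ t : ℝ, z = p + t • (q - p))
    (hparab : z.2 = z.1 ^ 2) :
    z.1 ∈ K ∧ z.2 ∈ K := by
  obtain ⟨t, hz⟩ := hline
  have hz1 : z.1 ∈ K := by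
    by_cases hd : q.1 - p.1 = 0
    · simpa [hz, hd] using hp1
    have hd_mem : q.1 - p.1 ∈ K := K.sub_mem hq1 hp1
    have he_mem : q.2 - p.2 ∈ K := K.sub_mem hq2 hp2
    exact K.mem_of_quadratic_eq_zero_of_sqrt_mem hK hd_mem (K.neg_mem he_mem)
      (K.sub_mem (K.mul_mem he_mem hp1) (K.mul_mem hd_mem hp2)) hd
      (quadratic_eq_zero_of_mem_line_of_snd_eq_sq hz hparab)
  exact ⟨hz1, hparab ▸ pow_mem hz1 2⟩

/-- If K is a square-root-closed subfield of ℝ, then the set K × K of points of ℝ² with both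
coordinates in K is closed under taking intersection points of its lines with the parabola
y = x². -/
theorem sqrt_closed_field_closed_under_parabola_intersections (K : Subfield ℝ)
    (hK : ∀ x : ℝ, x ∈ K → 0 ≤ x → ∃ y ∈ K, y ^ 2 = x)
    (p q : ℝ × ℝ) (hp1 : p.1 ∈ K) (hp2 : p.2 ∈ K) (hq1 : q.1 ∈ K) (hq2 : q.2 ∈ K)
    (hpq : p ≠ q) (z : ℝ × ℝ)
    (hline : ∃ t : ℝ, z = p + t • (q - p))
    (hparab : z.2 = z.1 ^ 2) :
    z.1 ∈ K ∧ z.2 ∈ K :=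
  sqrt_closed_field_closed_under_parabola_intersections_general K hK p q hp1 hp2 hq1 hq2 z hline
    hparab
end

section
/- Let K be a subfield of ℝ such that every nonnegative element of K has a square root in K. Let a, b, s ∈ K with s > 0, and let C = {(x, y) ∈ ℝ² : (x − a)² + (y − b)² = s} be the circle with center (a, b) and squared radius s. Let p, q ∈ K × K be distinct points, and let z ∈ ℝ² lie on the line through p and q and on C. Then z ∈ K × K. -/
/-! The points of the line through `p` and `q` are `p + t • (q - p)`, and such a point lies on the
circle exactly when `t` is a root of a quadratic polynomial with coefficients in `K`, whose leading
coefficient `‖q - p‖²` is nonzero. A real root of such a quadratic has nonnegative discriminant,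
so the quadratic formula expresses it with a square root taken in `K`; hence `t ∈ K`, and so are
the coordinates of `p + t • (q - p)`. -/

namespace Subfield

theorem mem_of_quadratic_eq_zero_s12 {F : Type*} [Field F] [NeZero (2 : F)] (K : Subfield F)
    {a b c r x : F} (ha : a ∈ K) (hb : b ∈ K) (hr : r ∈ K) (ha0 : a ≠ 0)
    (hr2 : discrim a b c = r * r) (hx : a * (x * x) + b * x + c = 0) : x ∈ K := by
  rcases (quadratic_eq_zero_iff ha0 hr2 x).1 hx with rfl | rfl <;> aesop

theorem mem_of_quadratic_eq_zero_of_sqrt_closed {F : Type*} [Field F] [LinearOrder F]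
    [IsStrictOrderedRing F] (K : Subfield F) (hK : ∀ x : F, x ∈ K → 0 ≤ x → ∃ y ∈ K, y ^ 2 = x)
    {a b c x : F} (ha : a ∈ K) (hb : b ∈ K) (hc : c ∈ K) (ha0 : a ≠ 0)
    (hx : a * (x * x) + b * x + c = 0) : x ∈ K := by
  have hD : discrim a b c = (2 * a * x + b) ^ 2 := discrim_eq_sq_of_quadratic_eq_zero hx
  obtain ⟨r, hr, hr2⟩ := hK (discrim a b c) (by unfold discrim; aesop) (hD ▸ sq_nonneg _)
  exact K.mem_of_quadratic_eq_zero_s12 ha hb hr ha0 (by rw [← hr2, sq]) hx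

end Subfield

theorem sqrt_closed_field_closed_under_circle_intersections_general (K : Subfield ℝ)
    (hK : ∀ x : ℝ, x ∈ K → 0 ≤ x → ∃ y ∈ K, y ^ 2 = x)
    (a b s : ℝ) (ha : a ∈ K) (hb : b ∈ K) (hs : s ∈ K)
    (p q : ℝ × ℝ) (hp1 : p.1 ∈ K) (hp2 : p.2 ∈ K) (hq1 : q.1 ∈ K) (hq2 : q.2 ∈ K)
    (hpq : p ≠ q) (z : ℝ × ℝ)
    (hline : ∃ t : ℝ, z = p + t • (q - p))
    (hcirc : (z.1 - a) ^ 2 + (z.2 - b) ^ 2 = s) :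
    z.1 ∈ K ∧ z.2 ∈ K := by
  obtain ⟨t, rfl⟩ := hline
  simp only [Prod.fst_add, Prod.snd_add, Prod.smul_fst, Prod.smul_snd, Prod.fst_sub,
    Prod.snd_sub, smul_eq_mul] at hcirc ⊢
  have hA : (q.1 - p.1) ^ 2 + (q.2 - p.2) ^ 2 ≠ 0 := by
    intro h
    obtain ⟨h1, h2⟩ := (add_eq_zero_iff_of_nonneg (sq_nonneg _) (sq_nonneg _)).1 h
    exact hpq (Prod.ext (by simpa [sub_eq_zero, eq_comm] using h1)
      (by simpa [sub_eq_zero, eq_comm] using h2))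
  have ht : t ∈ K := K.mem_of_quadratic_eq_zero_of_sqrt_closed hK
    (b := 2 * ((p.1 - a) * (q.1 - p.1) + (p.2 - b) * (q.2 - p.2)))
    (c := (p.1 - a) ^ 2 + (p.2 - b) ^ 2 - s) (by aesop) (by aesop) (by aesop) hA
    (by linear_combination hcirc)
  constructor <;> aesop

/-- If K is a square-root-closed subfield of ℝ, then the set K × K of points of ℝ² with both
coordinates in K is closed under taking intersection points of its lines with any circle whose
center coordinates and squared radius lie in K. -/
theorem sqrt_closed_field_closed_under_circle_intersections (K : Subfield ℝ)
    (hK : ∀ x : ℝ, x ∈ K → 0 ≤ x → ∃ y ∈ K, y ^ 2 = x)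
    (a b s : ℝ) (ha : a ∈ K) (hb : b ∈ K) (hs : s ∈ K) (hspos : 0 < s)
    (p q : ℝ × ℝ) (hp1 : p.1 ∈ K) (hp2 : p.2 ∈ K) (hq1 : q.1 ∈ K) (hq2 : q.2 ∈ K)
    (hpq : p ≠ q) (z : ℝ × ℝ)
    (hline : ∃ t : ℝ, z = p + t • (q - p))
    (hcirc : (z.1 - a) ^ 2 + (z.2 - b) ^ 2 = s) :
    z.1 ∈ K ∧ z.2 ∈ K :=
  sqrt_closed_field_closed_under_circle_intersections_general K hK a b s ha hb hs p q hp1 hp2 hq1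
    hq2 hpq z hline hcirc
end
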